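/- arXiv:2011.11468 — 2 statements merged into one kernel-verified Lean document; each statement's English description precedes it below -/
import Mathlib

section
/- Let p be a prime, let P := {x ∈ ZMod p : 0 < x < p/4} and Q := {x ∈ ZMod p : p/2 < x < p} (inequalities referring to the representatives in {0,1,…,p−1}), and set A := P ∩ Q*, where Q* := {q⁻¹ : q ∈ Q}. Then (A + A) ∩ A* = ∅, where A* := {a⁻¹ : a ∈ A}; consequently 1 ∉ A(A+A) = {a·(b+c) : a,b,c ∈ A}. -/
/-! Every `a ∈ A` has representative below `p / 4`, so for `b, c ∈ A` the representative of
`b + c` is below `p / 2`, while `a⁻¹ ∈ Q` has representative above `p / 2`. Hence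
`b + c ≠ a⁻¹`, which is both claims, since `a * (b + c) = 1` forces `b + c = a⁻¹`. -/

open Finset
open scoped Classical Pointwise

noncomputable section

/-- Set of multiplicative inverses. -/
def inv' {p : ℕ} (A : Finset (ZMod p)) : Finset (ZMod p) := A.image (fun x => x⁻¹)

theorem inv'_eq_inv {p : ℕ} (S : Finset (ZMod p)) : inv' S = S⁻¹ :=
  rfl

theorem ZMod.add_ne_of_val_lt_quarter {n : ℕ} {b c d : ZMod n} (hb : (b.val : ℝ) < n / 4)
    (hc : (c.val : ℝ) < n / 4) (hd : (n : ℝ) / 2 < d.val) : b + c ≠ d := by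
  rintro rfl
  have : ((b + c).val : ℝ) ≤ b.val + c.val := by exact_mod_cast ZMod.val_add_le b c
  linarith

/-- For `P = {x : 0 < x < p/4}`, `Q = {x : p/2 < x < p}` and `A = P ∩ Q*`, the set
`A + A` does not meet `A*`; consequently `1 ∉ A(A+A)`. -/
theorem example_a_mul_a_add_a (p : ℕ) [Fact p.Prime]
    (P Q A : Finset (ZMod p))
    (hP : P = Finset.univ.filter fun x => 0 < (x.val : ℝ) ∧ (x.val : ℝ) < (p : ℝ) / 4)
    (hQ : Q = Finset.univ.filter fun x => (p : ℝ) / 2 < (x.val : ℝ) ∧ (x.val : ℝ) < (p : ℝ))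
    (hA : A = P ∩ inv' Q) :
    (A + A) ∩ inv' A = ∅ ∧
      ∀ a ∈ A, ∀ b ∈ A, ∀ c ∈ A, a * (b + c) ≠ 1 := by
  have bounds : ∀ a ∈ A, (a.val : ℝ) < p / 4 ∧ (p : ℝ) / 2 < (a⁻¹).val := by
    intro a ha
    rw [hA, mem_inter, inv'_eq_inv, mem_inv', hP, hQ] at ha
    simp only [mem_filter, mem_univ, true_and] at ha
    exact ⟨ha.1.2, ha.2.1⟩
  have add_ne_inv : ∀ a ∈ A, ∀ b ∈ A, ∀ c ∈ A, b + c ≠ a⁻¹ := fun a ha b hb c hc =>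
    ZMod.add_ne_of_val_lt_quarter (bounds b hb).1 (bounds c hc).1 (bounds a ha).2
  refine ⟨eq_empty_iff_forall_notMem.mpr fun x hx => ?_, fun a ha b hb c hc h =>
    add_ne_inv a ha b hb c hc (eq_inv_of_mul_eq_one_left (by rwa [mul_comm]))⟩
  obtain ⟨hsum, hinv⟩ := mem_inter.mp hx
  obtain ⟨b, hb, c, hc, rfl⟩ := mem_add.mp hsum
  exact add_ne_inv _ (mem_inv'.mp (inv'_eq_inv A ▸ hinv)) b hb c hc (inv_inv _).symm
end
end

section
/- Let p be a prime, let δ ∈ (0,1) and T > 1 be real parameters, and let X, Y ⊆ ZMod p with |X| = κ·p for some κ > 0. Then there exists a set E ⊆ X with |E| ≤ |X|/T such that (X \ E) ∩ (Y +_{δT/κ} Z) = ∅, where Z := (ZMod p) \ (X −_δ Y) and X −_δ Y := {x ∈ ZMod p : #{(a,b) ∈ X×Y : a−b = x} ≥ δ·p}. -/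
open Finset
open scoped Classical Pointwise

noncomputable section

/-- Partial sumset `A +_ε B`. -/
def psum {p : ℕ} [NeZero p] (A B : Finset (ZMod p)) (ε : ℝ) : Finset (ZMod p) :=
  Finset.univ.filter fun x =>
    ε * p ≤ (((A ×ˢ B).filter fun ab => ab.1 + ab.2 = x).card : ℝ)

/-- Partial difference set `A −_ε B`. -/
def pdiff {p : ℕ} [NeZero p] (A B : Finset (ZMod p)) (ε : ℝ) : Finset (ZMod p) :=
  Finset.univ.filter fun x =>
    ε * p ≤ (((A ×ˢ B).filter fun ab => ab.1 - ab.2 = x).card : ℝ)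

/-!
Take `E := X ∩ (Y +_ε Z)` with `ε = δT/κ`. Every `x ∈ E` has at least `εp` representations
`x = y + z` with `y ∈ Y`, `z ∈ Z`, and `(y, z) ↦ (y + z, y)` sends these injectively to
representations `z = a - y` with `a ∈ X`. Each `z ∈ Z` has fewer than `δp` of those, so
`|E| · εp ≤ |Z| · δp ≤ δp²`, i.e. `|E| ≤ κp / T = |X| / T`.
-/

section Counting

variable {G : Type*} [AddCommGroup G] [DecidableEq G]

theorem sum_card_add_eq_le_sum_card_sub_eq {E X : Finset G} (hEX : E ⊆ X) (Y Z : Finset G) :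
    ∑ x ∈ E, #{yz ∈ Y ×ˢ Z | yz.1 + yz.2 = x} ≤ ∑ z ∈ Z, #{ay ∈ X ×ˢ Y | ay.1 - ay.2 = z} := by
  rw [sum_card_fiberwise_eq_card_filter, sum_card_fiberwise_eq_card_filter]
  refine card_le_card_of_injOn (fun yz => (yz.1 + yz.2, yz.1)) ?_ ?_
  · rintro ⟨y, z⟩ hyz
    simp only [coe_filter, mem_product, Set.mem_ofPred_eq] at hyz ⊢
    exact ⟨⟨hEX hyz.2, hyz.1.1⟩, by simpa using hyz.1.2⟩
  · rintro ⟨y, z⟩ - ⟨y', z'⟩ - h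
    simp only [Prod.mk.injEq] at h ⊢
    exact ⟨h.2, by simpa [h.2] using h.1⟩

theorem card_mul_le_card_mul_of_forall_le {E X Y Z : Finset G} (hEX : E ⊆ X) {s t : ℝ}
    (hE : ∀ x ∈ E, s ≤ #{yz ∈ Y ×ˢ Z | yz.1 + yz.2 = x})
    (hZ : ∀ z ∈ Z, (#{ay ∈ X ×ˢ Y | ay.1 - ay.2 = z} : ℝ) ≤ t) :
    #E * s ≤ #Z * t := by
  calc #E * s = ∑ _x ∈ E, s := by rw [sum_const, nsmul_eq_mul]
    _ ≤ ∑ x ∈ E, (#{yz ∈ Y ×ˢ Z | yz.1 + yz.2 = x} : ℝ) := sum_le_sum hE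
    _ ≤ ∑ z ∈ Z, (#{ay ∈ X ×ˢ Y | ay.1 - ay.2 = z} : ℝ) := by
      exact_mod_cast sum_card_add_eq_le_sum_card_sub_eq hEX Y Z
    _ ≤ ∑ _z ∈ Z, t := sum_le_sum hZ
    _ = #Z * t := by rw [sum_const, nsmul_eq_mul]

end Counting

section PartialSumsets

variable {p : ℕ} [NeZero p] {A B : Finset (ZMod p)} {ε : ℝ} {x : ZMod p}

theorem mem_psum : x ∈ psum A B ε ↔ ε * p ≤ #{ab ∈ A ×ˢ B | ab.1 + ab.2 = x} := by
  simp [psum]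

theorem notMem_pdiff : x ∉ pdiff A B ε ↔ #{ab ∈ A ×ˢ B | ab.1 - ab.2 = x} < ε * p := by
  simp [pdiff]

end PartialSumsets

/-- There is an exceptional set `E ⊆ X`, `|E| ≤ |X|/T`, such that
`X \ E` avoids `Y +_{δT/κ} Z`, where `Z` is the complement of `X −_δ Y`. -/
theorem avoid_partial_sumset (p : ℕ) [Fact p.Prime] (δ T κ : ℝ)
    (hδ : δ ∈ Set.Ioo (0 : ℝ) 1) (hT : 1 < T) (hκ : 0 < κ)
    (X Y : Finset (ZMod p)) (hX : (X.card : ℝ) = κ * p) :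
    ∃ E ⊆ X, (E.card : ℝ) ≤ (X.card : ℝ) / T ∧
      (X \ E) ∩ psum Y (Finset.univ \ pdiff X Y δ) (δ * T / κ) = ∅ := by
  obtain ⟨hδ0, -⟩ := hδ
  set ε := δ * T / κ
  set Z := univ \ pdiff X Y δ
  set E := X ∩ psum Y Z ε
  refine ⟨E, inter_subset_left, ?_, by rw [sdiff_inter_self_left, sdiff_inter_self]⟩
  have hp : (0 : ℝ) < p := by exact_mod_cast (Fact.out : p.Prime).pos
  have hcount : #E * (ε * p) ≤ #Z * (δ * p) :=
    card_mul_le_card_mul_of_forall_le inter_subset_left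
      (fun x hx => mem_psum.1 (mem_inter.1 hx).2)
      (fun z hz => (notMem_pdiff.1 (mem_sdiff.1 hz).2).le)
  have hZ : (#Z : ℝ) ≤ p := by exact_mod_cast (card_le_univ Z).trans_eq (ZMod.card p)
  have hδp : 0 < δ * p / κ := by positivity
  rw [hX, le_div_iff₀ (by linarith)]
  refine le_of_mul_le_mul_right ?_ hδp
  calc #E * T * (δ * p / κ) = #E * (ε * p) := by ring
    _ ≤ #Z * (δ * p) := hcount
    _ ≤ p * (δ * p) := by gcongr
    _ = κ * p * (δ * p / κ) := by field_simp
end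
end
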